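/- arXiv:1612.04981 — 5 statements merged into one kernel-verified Lean document; each statement's English description precedes it below -/
import Mathlib

section
/- If every downward trace included state's downward language is a subset relation, i.e., q ⊑^dw q' iff D(q) ⊆ D(q'), then saturation with S(id, ⊑^dw) preserves the language: adding a transition ⟨p, σ, r₁…rₙ⟩ whenever there exists ⟨p, σ, r₁'…rₙ'⟩ ∈ δ with rᵢ ⊑^dw rᵢ' for all i does not change L(A). -/
/-- Trees over an alphabet: a node label and a list of children. -/
inductive TTree (Sym : Type) : Type where
  | node : Sym → List (TTree Sym) → TTree Sym

/-- A top-down tree automaton: transitions and initial states. -/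
structure TDTA (Q Sym : Type) where
  delta : Set (Q × Sym × List Q)
  init : Set Q

/-- `Accepts δ q t`: there is a run of the transition relation `δ` on the
closed tree `t` rooted at state `q` (leaf rules are transitions with empty target list). -/
inductive Accepts {Q Sym : Type} (δ : Set (Q × Sym × List Q)) : Q → TTree Sym → Prop where
  | node {q : Q} {a : Sym} {qs : List Q} {ts : List (TTree Sym)}
      (hmem : (q, a, qs) ∈ δ) (hlen : qs.length = ts.length)
      (hchild : ∀ i : Fin qs.length, Accepts δ (qs.get i) (ts.get (Fin.cast hlen i))) :
      Accepts δ q (TTree.node a ts)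

/-- The downward language of a state. -/
def Dlang {Q Sym : Type} (δ : Set (Q × Sym × List Q)) (q : Q) : Set (TTree Sym) :=
  {t | Accepts δ q t}

/-- The language of a tree automaton. -/
def Lang {Q Sym : Type} (A : TDTA Q Sym) : Set (TTree Sym) :=
  {t | ∃ q ∈ A.init, Accepts A.delta q t}

/-- The `S`-saturated automaton: add every potential transition `t'` for which
some existing transition `t ∈ δ` satisfies `t' S t`. -/
def satAut {Q Sym : Type} (A : TDTA Q Sym)
    (S : Q × Sym × List Q → Q × Sym × List Q → Prop) : TDTA Q Sym :=
  ⟨{t' | ∃ t ∈ A.delta, S t' t}, A.init⟩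

/-- The pruned automaton: keep only the transitions that are maximal w.r.t. `P`. -/
def pruneAut {Q Sym : Type} (A : TDTA Q Sym)
    (P : Q × Sym × List Q → Q × Sym × List Q → Prop) : TDTA Q Sym :=
  ⟨{t | t ∈ A.delta ∧ ∀ t' ∈ A.delta, ¬ P t t'}, A.init⟩

/-- The quotient automaton by an equivalence (setoid) on states. -/
def quotAut {Q Sym : Type} (A : TDTA Q Sym) (s : Setoid Q) : TDTA (Quotient s) Sym :=
  ⟨{t | ∃ r ∈ A.delta, t = (Quotient.mk s r.1, r.2.1, r.2.2.map (Quotient.mk s))},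
   {x | ∃ q ∈ A.init, x = Quotient.mk s q}⟩

/-- `Srel Rs Rt` compares two transitions over the same symbol:
sources by `Rs`, target tuples componentwise by `Rt`. -/
def Srel {Q Sym : Type} (Rs Rt : Q → Q → Prop) :
    Q × Sym × List Q → Q × Sym × List Q → Prop :=
  fun t' t => t'.2.1 = t.2.1 ∧ Rs t'.1 t.1 ∧ List.Forall₂ Rt t'.2.2 t.2.2

section

variable {Q Sym : Type}

theorem Accepts.mono {δ δ' : Set (Q × Sym × List Q)} (hδ : δ ⊆ δ') {q : Q} {t : TTree Sym}
    (h : Accepts δ q t) : Accepts δ' q t := by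
  induction h with
  | node hmem hlen _ ih => exact .node (hδ hmem) hlen ih

theorem Srel_refl {Rs Rt : Q → Q → Prop} (hs : ∀ q, Rs q q) (ht : ∀ q, Rt q q)
    (r : Q × Sym × List Q) : Srel Rs Rt r r :=
  ⟨rfl, hs r.1, List.forall₂_same.mpr fun q _ => ht q⟩

theorem delta_subset_satAut_delta (A : TDTA Q Sym)
    {S : Q × Sym × List Q → Q × Sym × List Q → Prop} (hS : ∀ r, S r r) :
    A.delta ⊆ (satAut A S).delta :=
  fun r hr => ⟨r, hr, hS r⟩

/-- A subtree accepted from a new target is accepted from the dominating old target, so at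
each node of the run the saturated transition can be traded for the transition of `A`
dominating it. -/
theorem Accepts.of_satAut_dlang {A : TDTA Q Sym} {q : Q} {t : TTree Sym}
    (h : Accepts (satAut A (Srel Eq fun x y => Dlang A.delta x ⊆ Dlang A.delta y)).delta
      q t) :
    Accepts A.delta q t := by
  induction h with
  | @node _ _ qs ts hmem hlen _ ih =>
    obtain ⟨⟨_, _, qs'⟩, hmem', rfl, rfl, hdom⟩ := hmem
    have hlen' : qs'.length = ts.length := hdom.length_eq.symm.trans hlen
    refine .node hmem' hlen' fun i => ?_
    have hi : (i : ℕ) < qs.length := hdom.length_eq.symm ▸ i.isLt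
    exact hdom.get hi i.isLt (ih ⟨i, hi⟩)

end

/-- saturation with `S(id, ⊑dw)` — same source and symbol, new
targets downward-trace dominated by the existing targets — preserves the
language. -/
theorem stmt5 {Q Sym : Type} (A : TDTA Q Sym) :
    Lang (satAut A (Srel (Eq : Q → Q → Prop)
      (fun x y => Dlang A.delta x ⊆ Dlang A.delta y))) = Lang A := by
  ext t
  refine ⟨fun ⟨q, hq, h⟩ => ⟨q, hq, h.of_satAut_dlang⟩, fun ⟨q, hq, h⟩ => ⟨q, hq, h.mono ?_⟩⟩
  exact delta_subset_satAut_delta A (Srel_refl (fun _ => rfl) fun _ => subset_rfl)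
end

section
/- Saturation with S(⊑^dw at source, id) preserves the language: adding a transition ⟨p, σ, r₁…rₙ⟩ whenever ⟨p', σ, r₁…rₙ⟩ ∈ δ and p ⊒^dw p', i.e., D(p') ⊆ D(p), does not change the language of the automaton, that is, L(Sat(A,S)) = L(A). -/
lemma sat6_sound {Q Sym : Type} (A : TDTA Q Sym) {q : Q} {t : TTree Sym}
    (h : Accepts (satAut A (Srel (fun x y => Dlang A.delta y ⊆ Dlang A.delta x)
      (Eq : Q → Q → Prop))).delta q t) : Accepts A.delta q t := by
  induction h with
  | node hmem hlen hchild ih =>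
    rename_i q0 a0 qs0 ts0
    obtain ⟨⟨p', a', qs'⟩, hd, heq, hsub, hf⟩ := hmem
    simp only at heq hsub hf
    have hq : qs0 = qs' := by
      clear ih hchild hd hsub
      induction hf with
      | nil => rfl
      | cons h _ ih2 => simp_all
    subst heq hq
    exact hsub (Accepts.node hd hlen ih)

/-- saturation with `S(⊒dw, id)` — the new source `p`
downward-includes the existing source `p'` (`D(p') ⊆ D(p)`), identical targets —
preserves the language. -/
theorem stmt6 {Q Sym : Type} (A : TDTA Q Sym) :
    Lang (satAut A (Srel (fun x y => Dlang A.delta y ⊆ Dlang A.delta x)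
      (Eq : Q → Q → Prop))) = Lang A := by
  ext t
  constructor
  · rintro ⟨q, hq, h⟩
    exact ⟨q, hq, sat6_sound A h⟩
  · rintro ⟨q, hq, h⟩
    refine ⟨q, hq, ?_⟩
    clear hq
    induction h with
    | node hmem hlen hchild ih =>
      exact Accepts.node ⟨_, hmem, rfl, subset_rfl, List.forall₂_same.mpr (fun _ _ => rfl)⟩ hlen ih
end

section
/- Quotienting by downward simulation equivalence preserves the language: if ≡ is the equivalence induced by downward simulation (p ≡ q iff p ⪯^dw q and q ⪯^dw p), then L(A/≡) = L(A). -/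
/-!
A run of `A/≡` from `[p]` on `a(t₁, …, tₙ)` starts with the image of some transition
`(r, a, r₁ … rₙ)` of `A` with `r ≡ p`. Inductively each `rᵢ` accepts `tᵢ` in `A`, so `r` accepts
the tree, and since `r ⪯ p` the simulation transfers this run to `p`. Conversely, the quotient
map sends runs of `A` to runs of `A/≡`.
-/

variable {Q Q' Sym : Type}

def IsDownwardSimulation (δ : Set (Q × Sym × List Q)) (sim : Q → Q → Prop) : Prop :=
  ∀ p q, sim p q → ∀ (a : Sym) (ps : List Q), (p, a, ps) ∈ δ →
    ∃ qs : List Q, (q, a, qs) ∈ δ ∧ ∃ h : ps.length = qs.length,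
      ∀ i : Fin ps.length, sim (ps.get i) (qs.get (Fin.cast h i))

namespace Accepts

variable {δ : Set (Q × Sym × List Q)}

theorem map {δ' : Set (Q' × Sym × List Q')} (f : Q → Q')
    (hf : ∀ r ∈ δ, (f r.1, r.2.1, r.2.2.map f) ∈ δ') {q : Q} {t : TTree Sym}
    (h : Accepts δ q t) : Accepts δ' (f q) t := by
  induction h with
  | @node q a qs ts hmem hlen _ ih =>
    exact node (hf _ hmem) (by simpa using hlen) fun i => by simpa using ih (i.cast (by simp))

theorem of_sim {sim : Q → Q → Prop} (hsim : IsDownwardSimulation δ sim) {p : Q} {t : TTree Sym}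
    (h : Accepts δ p t) {q : Q} (hpq : sim p q) : Accepts δ q t := by
  induction h generalizing q with
  | @node p a ps ts hmem hlen _ ih =>
    obtain ⟨qs, hmem', hlen', hchild⟩ := hsim p q hpq a ps hmem
    exact node hmem' (hlen'.symm.trans hlen) fun i => by
      simpa using ih (i.cast hlen'.symm) (hchild (i.cast hlen'.symm))

theorem of_quotAut {A : TDTA Q Sym} {s : Setoid Q} {sim : Q → Q → Prop}
    (hsim : IsDownwardSimulation A.delta sim) (hs : ∀ p q, s p q → sim p q) {x : Quotient s}
    {t : TTree Sym} (h : Accepts (quotAut A s).delta x t) {p : Q} (hp : ⟦p⟧ = x) :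
    Accepts A.delta p t := by
  induction h generalizing p with
  | @node x a xs ts hmem hlen _ ih =>
    obtain ⟨⟨r, a, rs⟩, hr, heq⟩ := hmem
    simp only [Prod.mk.injEq] at heq
    obtain ⟨rfl, rfl, rfl⟩ := heq
    have hr_accepts : Accepts A.delta r (TTree.node a ts) :=
      node hr (by simpa using hlen) fun i => by
        simpa using ih (i.cast (by simp)) (p := rs.get i) (by simp)
    exact hr_accepts.of_sim hsim (hs _ _ (Quotient.exact hp.symm))

end Accepts

theorem lang_quotAut {A : TDTA Q Sym} {s : Setoid Q} {sim : Q → Q → Prop}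
    (hsim : IsDownwardSimulation A.delta sim) (hs : ∀ p q, s p q → sim p q) :
    Lang (quotAut A s) = Lang A := by
  ext t
  constructor
  · rintro ⟨_, ⟨q, hq, rfl⟩, h⟩
    exact ⟨q, hq, h.of_quotAut hsim hs rfl⟩
  · rintro ⟨q, hq, h⟩
    exact ⟨⟦q⟧, ⟨q, hq, rfl⟩, h.map (δ' := (quotAut A s).delta) _ fun r hr => ⟨r, hr, rfl⟩⟩

/-- quotienting by the equivalence induced by a downward
simulation preorder preserves the language: `L(A/≡) = L(A)`. -/
theorem stmt9 {Q Sym : Type} (A : TDTA Q Sym) (sim : Q → Q → Prop)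
    (hrefl : ∀ q, sim q q)
    (htrans : ∀ p q r, sim p q → sim q r → sim p r)
    (hstep : ∀ p q, sim p q → ∀ (a : Sym) (ps : List Q), (p, a, ps) ∈ A.delta →
      ∃ qs : List Q, (q, a, qs) ∈ A.delta ∧ ∃ h : ps.length = qs.length,
        ∀ i : Fin ps.length, sim (ps.get i) (qs.get (Fin.cast h i))) :
    Lang (quotAut A
      ⟨fun p q => sim p q ∧ sim q p,
       ⟨fun q => ⟨hrefl q, hrefl q⟩,
        fun h => ⟨h.2, h.1⟩,
        fun h1 h2 => ⟨htrans _ _ _ h1.1 h2.1, htrans _ _ _ h2.2 h1.2⟩⟩⟩) = Lang A :=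
  lang_quotAut hstep fun _ _ h => h.1
end

section
/- There exists a tree automaton showing that S(≡^up(≡^dw), id) is not good for saturation: adding a transition whose source is upward-trace-equivalent (parameterized by downward equivalence) to the source of an existing transition, with identical targets, can strictly enlarge the language. -/
/-- Runs with open leaves: trees over `Sym ⊕ Q`, where a leaf labelled by a state
`q` (a "hole") is read exactly at state `q`.  `AcceptsH δ q t` means there is such
a (partial) run of `δ` on `t` rooted at `q`. -/
inductive AcceptsH {Q Sym : Type} (δ : Set (Q × Sym × List Q)) :
    Q → TTree (Sym ⊕ Q) → Prop where
  | hole (q : Q) : AcceptsH δ q (TTree.node (Sum.inr q) [])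
  | node {q : Q} {a : Sym} {qs : List Q} {ts : List (TTree (Sym ⊕ Q))}
      (hmem : (q, a, qs) ∈ δ) (hlen : qs.length = ts.length)
      (hchild : ∀ i : Fin qs.length, AcceptsH δ (qs.get i) (ts.get (Fin.cast hlen i))) :
      AcceptsH δ q (TTree.node (Sum.inl a) ts)

/-- One-hole contexts over `Sym ⊕ Q`. -/
inductive Ctx (Q Sym : Type) : Type where
  | hole : Ctx Q Sym
  | node : Sym → List (TTree (Sym ⊕ Q)) → Ctx Q Sym → List (TTree (Sym ⊕ Q)) → Ctx Q Sym

/-- Filling the hole of a context with a tree. -/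
def fill {Q Sym : Type} : Ctx Q Sym → TTree (Sym ⊕ Q) → TTree (Sym ⊕ Q)
  | Ctx.hole, t => t
  | Ctx.node a l C r, t => TTree.node (Sum.inl a) (l ++ fill C t :: r)

/-- A state leaf. -/
def leafQ {Q Sym : Type} (q : Q) : TTree (Sym ⊕ Q) := TTree.node (Sum.inr q) []

/-- `TreeRel R` relates two trees with identical symbol structure whose state
leaves are componentwise related by `R`. -/
inductive TreeRel {Q Sym : Type} (R : Q → Q → Prop) :
    TTree (Sym ⊕ Q) → TTree (Sym ⊕ Q) → Prop where
  | leaf {p q : Q} : R p q →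
      TreeRel R (TTree.node (Sum.inr p) []) (TTree.node (Sum.inr q) [])
  | node {a : Sym} {ts ts' : List (TTree (Sym ⊕ Q))} (hlen : ts.length = ts'.length)
      (h : ∀ i : Fin ts.length, TreeRel R (ts.get i) (ts'.get (Fin.cast hlen i))) :
      TreeRel R (TTree.node (Sum.inl a) ts) (TTree.node (Sum.inl a) ts')

/-- `CtxRel R` relates two contexts with identical symbol structure whose side
branches are `TreeRel R`-related. -/
inductive CtxRel {Q Sym : Type} (R : Q → Q → Prop) : Ctx Q Sym → Ctx Q Sym → Prop where
  | hole : CtxRel R Ctx.hole Ctx.hole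
  | node {a : Sym} {l r l' r' : List (TTree (Sym ⊕ Q))} {C C' : Ctx Q Sym}
      (hl : List.Forall₂ (TreeRel R) l l') (hC : CtxRel R C C')
      (hr : List.Forall₂ (TreeRel R) r r') :
      CtxRel R (Ctx.node a l C r) (Ctx.node a l' C' r')

/-- A tree (with open state leaves) is accepted by the automaton. -/
def AccLangH {Q Sym : Type} (A : TDTA Q Sym) (t : TTree (Sym ⊕ Q)) : Prop :=
  ∃ i ∈ A.init, AcceptsH A.delta i t

/-- Upward trace inclusion parameterized by a relation `R` on side-branch states:
every accepting run placing `p` at the hole of a context can be replaced by an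
accepting run placing `q` at the hole of an `R`-related context. -/
def upLe {Q Sym : Type} (A : TDTA Q Sym) (R : Q → Q → Prop) (p q : Q) : Prop :=
  ∀ C : Ctx Q Sym, AccLangH A (fill C (leafQ p)) →
    ∃ C' : Ctx Q Sym, CtxRel R C C' ∧ AccLangH A (fill C' (leafQ q))

/-- Upward trace equivalence parameterized by `R`. -/
def upEq {Q Sym : Type} (A : TDTA Q Sym) (R : Q → Q → Prop) (p q : Q) : Prop :=
  upLe A R p q ∧ upLe A R q p

/-- Upward trace inclusion parameterized by identity: every accepting run using
`p` at an open leaf can be replaced by one using `q` there, agreeing with the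
original run on all other (open) leaves. -/
def upLeId {Q Sym : Type} (A : TDTA Q Sym) (p q : Q) : Prop :=
  ∀ C : Ctx Q Sym, AccLangH A (fill C (leafQ p)) → AccLangH A (fill C (leafQ q))

/-!
Take the automaton `A` with initial state `i` and rules `i → a(p, q) | a(r, q₁) | a(p₁, s)`,
`r → b`, `s → b`. The states `p, q, q₁, p₁` have no rules, so each `a`-rule of `i` has a child
with empty language and `L(A) = ∅`.
The only accepting context of `p` is `a(□, q)` and that of `r` is `a(□, q₁)`; as `q` and `q₁`
have the same (empty) downward language, `p ≡up(≡dw) r`. Symmetrically `q ≡up(≡dw) s` through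
`a(p, □)` and `a(p₁, □)`. Saturation therefore copies the leaf rules `r → b` and `s → b` to `p`
and `q`, and then `i → a(p, q)` accepts `a(b, b)`.
-/

theorem List.forall₂_iff_fin {α β : Type*} {R : α → β → Prop} {l₁ : List α} {l₂ : List β} :
    List.Forall₂ R l₁ l₂ ↔
      ∃ h : l₁.length = l₂.length, ∀ i : Fin l₁.length, R (l₁.get i) (l₂.get (Fin.cast h i)) := by
  rw [List.forall₂_iff_get]
  exact ⟨fun ⟨h, hR⟩ => ⟨h, fun i => hR i i.2 (h ▸ i.2)⟩,
    fun ⟨h, hR⟩ => ⟨h, fun i h₁ _ => hR ⟨i, h₁⟩⟩⟩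

theorem List.forall₂_append_cons_right_iff {α β : Type*} {R : α → β → Prop} {qs : List α}
    {l r : List β} {t : β} :
    List.Forall₂ R qs (l ++ t :: r) ↔
      ∃ ls q rs, qs = ls ++ q :: rs ∧ List.Forall₂ R ls l ∧ R q t ∧ List.Forall₂ R rs r := by
  induction l generalizing qs with
  | nil =>
    simp only [List.nil_append, List.forall₂_cons_right_iff, List.forall₂_nil_right_iff]
    constructor
    · rintro ⟨q, rs, hq, hrs, rfl⟩
      exact ⟨[], q, rs, rfl, rfl, hq, hrs⟩
    · rintro ⟨ls, q, rs, rfl, rfl, hq, hrs⟩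
      exact ⟨q, rs, hq, hrs, rfl⟩
  | cons b l ih =>
    simp only [List.cons_append, List.forall₂_cons_right_iff, ih]
    constructor
    · rintro ⟨q', _, hq', ⟨ls, q, rs, rfl, hls, hq, hrs⟩, rfl⟩
      exact ⟨q' :: ls, q, rs, rfl, ⟨q', ls, hq', hls, rfl⟩, hq, hrs⟩
    · rintro ⟨_, q, rs, rfl, ⟨q', ls, hq', hls, rfl⟩, hq, hrs⟩
      exact ⟨q', ls ++ q :: rs, hq', ⟨ls, q, rs, rfl, hls, hq, hrs⟩, rfl⟩

section Runs

variable {Q Sym : Type} {δ : Set (Q × Sym × List Q)}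

theorem accepts_node_iff {q : Q} {a : Sym} {ts : List (TTree Sym)} :
    Accepts δ q (TTree.node a ts) ↔ ∃ qs, (q, a, qs) ∈ δ ∧ List.Forall₂ (Accepts δ) qs ts := by
  simp only [List.forall₂_iff_fin]
  constructor
  · rintro ⟨hmem, hlen, hchild⟩
    exact ⟨_, hmem, hlen, hchild⟩
  · rintro ⟨qs, hmem, hlen, hchild⟩
    exact Accepts.node hmem hlen hchild

theorem dlang_eq_empty {q : Q}
    (hq : ∀ a qs, (q, a, qs) ∈ δ → ∃ q' ∈ qs, Dlang δ q' = ∅) : Dlang δ q = ∅ := by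
  ext t
  simp only [Dlang, Set.mem_ofPred_eq, Set.mem_empty_iff_false, iff_false]
  rintro ⟨hmem, hlen, hchild⟩
  obtain ⟨q', hq', hempty⟩ := hq _ _ hmem
  obtain ⟨k, rfl⟩ := List.get_of_mem hq'
  exact Set.eq_empty_iff_forall_notMem.mp hempty _ (hchild k)

theorem acceptsH_node_iff {q : Q} {a : Sym} {ts : List (TTree (Sym ⊕ Q))} :
    AcceptsH δ q (TTree.node (Sum.inl a) ts) ↔
      ∃ qs, (q, a, qs) ∈ δ ∧ List.Forall₂ (AcceptsH δ) qs ts := by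
  simp only [List.forall₂_iff_fin]
  constructor
  · rintro (_ | ⟨hmem, hlen, hchild⟩)
    exact ⟨_, hmem, hlen, hchild⟩
  · rintro ⟨qs, hmem, hlen, hchild⟩
    exact AcceptsH.node hmem hlen hchild

theorem acceptsH_leafQ_iff {q x : Q} : AcceptsH δ q (leafQ x : TTree (Sym ⊕ Q)) ↔ q = x := by
  constructor
  · rintro ⟨⟩
    rfl
  · rintro rfl
    exact AcceptsH.hole q

theorem acceptsH_iff_eq_leafQ {q : Q} (hq : ∀ a qs, (q, a, qs) ∉ δ) {t : TTree (Sym ⊕ Q)} :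
    AcceptsH δ q t ↔ t = leafQ q := by
  constructor
  · rintro (_ | ⟨hmem, -, -⟩)
    · rfl
    · exact absurd hmem (hq _ _)
  · rintro rfl
    exact AcceptsH.hole q

theorem eq_hole_of_acceptsH_fill_leafQ {q x : Q} (hq : ∀ a qs, (q, a, qs) ∈ δ → qs = [])
    {C : Ctx Q Sym} (h : AcceptsH δ q (fill C (leafQ x))) : C = Ctx.hole ∧ q = x := by
  cases C with
  | hole => exact ⟨rfl, acceptsH_leafQ_iff.mp h⟩
  | node a l C r =>
    obtain ⟨qs, hmem, hqs⟩ := acceptsH_node_iff.mp h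
    cases hq a qs hmem
    simpa using hqs.length_eq

end Runs

section Contexts

variable {Q Sym : Type} {A : TDTA Q Sym}

theorem accLangH_leafQ_iff {x : Q} : AccLangH A (leafQ x) ↔ x ∈ A.init := by
  simp [AccLangH, acceptsH_leafQ_iff]

/-- In an automaton whose initial rules lead only to states with leaf rules, every accepting
context has depth one. -/
theorem accLangH_fill_node_leafQ_iff
    (hA : ∀ q₀ ∈ A.init, ∀ a qs, (q₀, a, qs) ∈ A.delta →
      ∀ q ∈ qs, ∀ b qs', (q, b, qs') ∈ A.delta → qs' = [])
    {a : Sym} {l r : List (TTree (Sym ⊕ Q))} {C : Ctx Q Sym} {x : Q} :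
    AccLangH A (fill (Ctx.node a l C r) (leafQ x)) ↔
      C = Ctx.hole ∧ ∃ q₀ ∈ A.init, ∃ ls rs, (q₀, a, ls ++ x :: rs) ∈ A.delta ∧
        List.Forall₂ (AcceptsH A.delta) ls l ∧ List.Forall₂ (AcceptsH A.delta) rs r := by
  simp only [AccLangH, fill, acceptsH_node_iff, List.forall₂_append_cons_right_iff]
  constructor
  · rintro ⟨q₀, h₀, _, hmem, ls, q, rs, rfl, hls, hq, hrs⟩
    obtain ⟨rfl, rfl⟩ := eq_hole_of_acceptsH_fill_leafQ (hA q₀ h₀ a _ hmem q (by simp)) hq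
    exact ⟨rfl, q₀, h₀, ls, rs, hmem, hls, hrs⟩
  · rintro ⟨rfl, q₀, h₀, ls, rs, hmem, hls, hrs⟩
    exact ⟨q₀, h₀, _, hmem, ls, x, rs, rfl, hls, AcceptsH.hole x, hrs⟩

theorem upEq_of_forall_accLangH_iff {R : Q → Q → Prop} {p q : Q} {C C' : Ctx Q Sym}
    (hp : ∀ D, AccLangH A (fill D (leafQ p)) ↔ D = C)
    (hq : ∀ D, AccLangH A (fill D (leafQ q)) ↔ D = C')
    (h : CtxRel R C C') (h' : CtxRel R C' C) : upEq A R p q := by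
  constructor
  · intro D hD
    obtain rfl := (hp D).mp hD
    exact ⟨C', h, (hq C').mpr rfl⟩
  · intro D hD
    obtain rfl := (hq D).mp hD
    exact ⟨C, h', (hp C).mpr rfl⟩

theorem mem_satAut_srel_eq {Rs : Q → Q → Prop} {q q' : Q} {c : Sym} {qs : List Q}
    (hmem : (q', c, qs) ∈ A.delta) (h : Rs q q') :
    (q, c, qs) ∈ (satAut A (Srel Rs Eq)).delta :=
  ⟨_, hmem, rfl, h, List.forall₂_refl qs⟩

end Contexts

namespace NotGFS

inductive State : Type
  | i | p | q | r | q₁ | p₁ | s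

inductive Letter : Type
  | a | b

open State Letter

def A : TDTA State Letter :=
  ⟨{(i, a, [p, q]), (i, a, [r, q₁]), (i, a, [p₁, s]), (r, b, []), (s, b, [])}, {i}⟩

theorem mem_delta {x : State} {c : Letter} {qs : List State} :
    (x, c, qs) ∈ A.delta ↔ x = i ∧ c = a ∧ qs = [p, q] ∨ x = i ∧ c = a ∧ qs = [r, q₁] ∨
      x = i ∧ c = a ∧ qs = [p₁, s] ∨ x = r ∧ c = b ∧ qs = [] ∨ x = s ∧ c = b ∧ qs = [] := by
  simp [A]

theorem mem_init {x : State} : x ∈ A.init ↔ x = i := Iff.rfl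

theorem acceptsH_isolated {x : State} (hx : x = p ∨ x = q ∨ x = q₁ ∨ x = p₁)
    {t : TTree (Letter ⊕ State)} : AcceptsH A.delta x t ↔ t = leafQ x :=
  acceptsH_iff_eq_leafQ (by rcases hx with rfl | rfl | rfl | rfl <;> simp [mem_delta])

theorem dlang_isolated {x : State} (hx : x = p ∨ x = q ∨ x = q₁ ∨ x = p₁) :
    Dlang A.delta x = ∅ :=
  dlang_eq_empty (by rcases hx with rfl | rfl | rfl | rfl <;> simp [mem_delta])

theorem lang_eq_empty : Lang A = ∅ := by
  have hi : Dlang A.delta i = ∅ := dlang_eq_empty (by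
    rintro c qs (⟨-, -, rfl⟩ | ⟨-, -, rfl⟩ | ⟨-, -, rfl⟩ | ⟨⟨⟩, -⟩ | ⟨⟨⟩, -⟩) <;>
      simp [dlang_isolated])
  ext t
  simp only [Lang, mem_init, exists_eq_left, Set.mem_empty_iff_false, iff_false]
  exact Set.eq_empty_iff_forall_notMem.mp hi t

theorem init_children_have_leaf_rules : ∀ q₀ ∈ A.init, ∀ c qs, (q₀, c, qs) ∈ A.delta →
    ∀ x ∈ qs, ∀ c' qs', (x, c', qs') ∈ A.delta → qs' = [] := by
  simp only [mem_init, mem_delta]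
  rintro _ rfl c qs (⟨-, -, rfl⟩ | ⟨-, -, rfl⟩ | ⟨-, -, rfl⟩ | ⟨⟨⟩, -⟩ | ⟨⟨⟩, -⟩) <;> simp

theorem accLangH_fill_leafQ_iff (D : Ctx State Letter) :
    (AccLangH A (fill D (leafQ i)) ↔ D = Ctx.hole) ∧
    (AccLangH A (fill D (leafQ p)) ↔ D = Ctx.node a [] Ctx.hole [leafQ q]) ∧
    (AccLangH A (fill D (leafQ q)) ↔ D = Ctx.node a [leafQ p] Ctx.hole []) ∧
    (AccLangH A (fill D (leafQ r)) ↔ D = Ctx.node a [] Ctx.hole [leafQ q₁]) ∧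
    (AccLangH A (fill D (leafQ s)) ↔ D = Ctx.node a [leafQ p₁] Ctx.hole []) := by
  cases D with
  | hole => simp [fill, accLangH_leafQ_iff, mem_init]
  | node c l C r =>
    simp [accLangH_fill_node_leafQ_iff init_children_have_leaf_rules, mem_init, mem_delta,
      List.cons_eq_append_iff, List.append_eq_cons_iff, List.forall₂_cons_left_iff,
      acceptsH_isolated, and_left_comm]

theorem upEq_i_i : upEq A (fun x y => Dlang A.delta x = Dlang A.delta y) i i :=
  upEq_of_forall_accLangH_iff (fun D => (accLangH_fill_leafQ_iff D).1)
    (fun D => (accLangH_fill_leafQ_iff D).1) CtxRel.hole CtxRel.hole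

theorem upEq_p_r : upEq A (fun x y => Dlang A.delta x = Dlang A.delta y) p r := by
  have h : Dlang A.delta q = Dlang A.delta q₁ := by simp [dlang_isolated]
  exact upEq_of_forall_accLangH_iff (fun D => (accLangH_fill_leafQ_iff D).2.1)
    (fun D => (accLangH_fill_leafQ_iff D).2.2.2.1)
    (.node .nil .hole (.cons (.leaf h) .nil)) (.node .nil .hole (.cons (.leaf h.symm) .nil))

theorem upEq_q_s : upEq A (fun x y => Dlang A.delta x = Dlang A.delta y) q s := by
  have h : Dlang A.delta p = Dlang A.delta p₁ := by simp [dlang_isolated]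
  exact upEq_of_forall_accLangH_iff (fun D => (accLangH_fill_leafQ_iff D).2.2.1)
    (fun D => (accLangH_fill_leafQ_iff D).2.2.2.2)
    (.node (.cons (.leaf h) .nil) .hole .nil) (.node (.cons (.leaf h.symm) .nil) .hole .nil)

theorem lang_satAut_ne :
    Lang (satAut A (Srel (upEq A fun x y => Dlang A.delta x = Dlang A.delta y) Eq)) ≠ Lang A := by
  rw [lang_eq_empty, ← Set.nonempty_iff_ne_empty]
  have hroot := mem_satAut_srel_eq (mem_delta.2 (.inl ⟨rfl, rfl, rfl⟩)) upEq_i_i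
  have hp := mem_satAut_srel_eq (mem_delta.2 (.inr (.inr (.inr (.inl ⟨rfl, rfl, rfl⟩))))) upEq_p_r
  have hq := mem_satAut_srel_eq (mem_delta.2 (.inr (.inr (.inr (.inr ⟨rfl, rfl, rfl⟩))))) upEq_q_s
  exact ⟨TTree.node a [TTree.node b [], TTree.node b []], i, rfl,
    accepts_node_iff.2 ⟨_, hroot, .cons (accepts_node_iff.2 ⟨_, hp, .nil⟩)
      (.cons (accepts_node_iff.2 ⟨_, hq, .nil⟩) .nil)⟩⟩

end NotGFS

/-- `S(≡up(≡dw), id)` is not GFS: there is an automaton where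
adding a transition whose source is upward-trace equivalent (parameterized by
downward equivalence) to the source of an existing transition, with identical
targets, strictly enlarges the language. -/
theorem stmt12 :
    ∃ (Q Sym : Type) (A : TDTA Q Sym),
      Lang (satAut A
        (Srel (fun p q => upEq A (fun x y => Dlang A.delta x = Dlang A.delta y) p q)
              (Eq : Q → Q → Prop))) ≠ Lang A :=
  ⟨_, _, NotGFS.A, NotGFS.lang_satAut_ne⟩
end

section
/- For a deterministic-like upward transfer: if (p₁,…,pₙ) is componentwise upward-trace included (parameterized by identity) in (q₁,…,qₙ), then for every tree t, every accepting t-run ρ, and every tuple of leaves v₁,…,vₙ of ρ at the same depth with ρ(vⱼ) = pⱼ, there exists an accepting t-run ρ' with ρ'(vⱼ) = qⱼ for all j and ρ'(v) = ρ(v) on all other leaves. -/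
/-- `ReplAt d prs t t'`: the trees `t` and `t'` coincide except that some state
leaves of `t` at depth exactly `d`, labelled (left to right) by the first
components of `prs`, are replaced in `t'` by the corresponding second
components. -/
inductive ReplAt {Q Sym : Type} :
    ℕ → List (Q × Q) → TTree (Sym ⊕ Q) → TTree (Sym ⊕ Q) → Prop where
  | repl (p q : Q) :
      ReplAt 0 [(p, q)] (TTree.node (Sum.inr p) []) (TTree.node (Sum.inr q) [])
  | keep (n : ℕ) (t : TTree (Sym ⊕ Q)) : ReplAt n [] t t
  | node {n : ℕ} {a : Sym} {prs : List (Q × Q)} {ts ts' : List (TTree (Sym ⊕ Q))}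
      (pss : List (List (Q × Q))) (hjoin : pss.flatten = prs)
      (hl1 : pss.length = ts.length) (hl2 : pss.length = ts'.length)
      (h : ∀ i : Fin pss.length,
        ReplAt n (pss.get i) (ts.get (Fin.cast hl1 i)) (ts'.get (Fin.cast hl2 i))) :
      ReplAt (n + 1) prs (TTree.node (Sum.inl a) ts) (TTree.node (Sum.inl a) ts')

/-
Replacing state leaves one at a time is harmless: `upLeId A p q` says exactly that the open
leaf `leafQ p` may be replaced by `leafQ q` under every context, and this contextual inclusion
`CtxLe` is a preorder which passes from the children of a node to the node itself, since
replacing one child is replacing a subtree inside a larger context.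
-/

def Ctx.comp {Q Sym : Type} : Ctx Q Sym → Ctx Q Sym → Ctx Q Sym
  | Ctx.hole, D => D
  | Ctx.node a l C r, D => Ctx.node a l (C.comp D) r

theorem fill_comp {Q Sym : Type} (C D : Ctx Q Sym) (t : TTree (Sym ⊕ Q)) :
    fill (C.comp D) t = fill C (fill D t) := by
  induction C with
  | hole => rfl
  | node a l C r ih => simp only [Ctx.comp, fill, ih]

def CtxLe {Q Sym : Type} (A : TDTA Q Sym) (t t' : TTree (Sym ⊕ Q)) : Prop :=
  ∀ C : Ctx Q Sym, AccLangH A (fill C t) → AccLangH A (fill C t')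

namespace CtxLe

variable {Q Sym : Type} {A : TDTA Q Sym}

theorem refl (t : TTree (Sym ⊕ Q)) : CtxLe A t t :=
  fun _ h => h

theorem trans {t₁ t₂ t₃ : TTree (Sym ⊕ Q)} (h₁₂ : CtxLe A t₁ t₂) (h₂₃ : CtxLe A t₂ t₃) :
    CtxLe A t₁ t₃ :=
  fun C h => h₂₃ C (h₁₂ C h)

theorem node_child {t t' : TTree (Sym ⊕ Q)} (h : CtxLe A t t') (a : Sym)
    (l r : List (TTree (Sym ⊕ Q))) :
    CtxLe A (TTree.node (Sum.inl a) (l ++ t :: r)) (TTree.node (Sum.inl a) (l ++ t' :: r)) := by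
  intro C hC
  have hD := h (C.comp (Ctx.node a l Ctx.hole r))
  rw [fill_comp, fill_comp] at hD
  exact hD hC

theorem node_append {ts ts' : List (TTree (Sym ⊕ Q))} (h : List.Forall₂ (CtxLe A) ts ts')
    (a : Sym) (l : List (TTree (Sym ⊕ Q))) :
    CtxLe A (TTree.node (Sum.inl a) (l ++ ts)) (TTree.node (Sum.inl a) (l ++ ts')) := by
  induction h generalizing l with
  | nil => exact refl _
  | @cons t t' ts ts' hhead _ ih =>
    have htail := ih (l ++ [t'])
    rw [← List.append_cons, ← List.append_cons] at htail
    exact (hhead.node_child a l ts).trans htail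

theorem node {ts ts' : List (TTree (Sym ⊕ Q))} (h : List.Forall₂ (CtxLe A) ts ts') (a : Sym) :
    CtxLe A (TTree.node (Sum.inl a) ts) (TTree.node (Sum.inl a) ts') :=
  node_append h a []

end CtxLe

theorem ReplAt.ctxLe {Q Sym : Type} {A : TDTA Q Sym} {d : ℕ} {prs : List (Q × Q)}
    {t t' : TTree (Sym ⊕ Q)} (hrepl : ReplAt d prs t t') (h : ∀ pq ∈ prs, upLeId A pq.1 pq.2) :
    CtxLe A t t' := by
  induction hrepl with
  | repl p q => exact h (p, q) (List.mem_singleton_self _)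
  | keep n t => exact CtxLe.refl t
  | node pss hjoin hl1 hl2 _ ih =>
    subst hjoin
    refine CtxLe.node (List.forall₂_iff_get.2 ⟨hl1.symm.trans hl2, fun i h₁ _ => ?_⟩) _
    exact ih ⟨i, hl1 ▸ h₁⟩ fun pq hpq => h pq (List.mem_flatten.2 ⟨_, pss.get_mem _, hpq⟩)

/-- if `(p₁,…,pₙ)` is componentwise upward-trace included
(parameterized by identity) in `(q₁,…,qₙ)`, then any accepting run with leaves
`p₁,…,pₙ` at the same depth can be turned into an accepting run with `q₁,…,qₙ`
at those leaves, agreeing with the original on all other leaves. -/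
theorem stmt13 {Q Sym : Type} (A : TDTA Q Sym) (prs : List (Q × Q))
    (h : ∀ pq ∈ prs, upLeId A pq.1 pq.2)
    (d : ℕ) (t t' : TTree (Sym ⊕ Q)) (hrepl : ReplAt d prs t t')
    (hacc : AccLangH A t) :
    AccLangH A t' :=
  hrepl.ctxLe h Ctx.hole hacc
end
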